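/- arXiv:1904.08969 — 2 statements merged into one kernel-verified Lean document; each statement's English description precedes it below -/
import Mathlib

section
/- Let X be a topological space which is a continuous image of a Čech-complete space P, and suppose every compact subset of X is scattered. Then for every continuous map f : X → Y to a functionally Hausdorff space Y, the image f(X) has cardinality at most max{l(P), ψ(Y)}. -/
open Cardinal Set Topology

universe u

def FunctionallyHausdorff (X : Type u) [TopologicalSpace X] : Prop :=
  ∀ x y : X, x ≠ y → ∃ f : X → unitInterval, Continuous f ∧ f x = 0 ∧ f y = 1

def IsCechComplete (X : Type u) [TopologicalSpace X] : Prop :=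
  ∃ (K : Type u) (_ : TopologicalSpace K) (e : X → K),
    CompactSpace K ∧ T2Space K ∧ IsEmbedding e ∧ DenseRange e ∧ IsGδ (Set.range e)

noncomputable def lindelofNumber (X : Type u) [TopologicalSpace X] : Cardinal.{u} :=
  sInf {κ : Cardinal.{u} | ℵ₀ ≤ κ ∧ ∀ U : Set (Set X), (∀ u ∈ U, IsOpen u) → ⋃₀ U = Set.univ →
    ∃ V ⊆ U, #↥V ≤ κ ∧ ⋃₀ V = Set.univ}

noncomputable def pseudocharacter (X : Type u) [TopologicalSpace X] : Cardinal.{u} :=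
  sInf {κ : Cardinal.{u} | ℵ₀ ≤ κ ∧ ∀ x : X, ∃ 𝒰 : Set (Set X),
    #↥𝒰 ≤ κ ∧ (∀ U ∈ 𝒰, IsOpen U ∧ x ∈ U) ∧ ⋂₀ 𝒰 = ⋂₀ {U : Set X | IsOpen U ∧ x ∈ U}}

def IsScatteredSet {X : Type u} [TopologicalSpace X] (S : Set X) : Prop :=
  ∀ T ⊆ S, T.Nonempty → ∃ x ∈ T, ∃ U : Set X, IsOpen U ∧ U ∩ T = {x}

def IsKAnalytic (X : Type u) [TopologicalSpace X] : Prop :=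
  ∃ (P : Type u) (_ : TopologicalSpace P) (f : P → X),
    LindelofSpace P ∧ IsCechComplete P ∧ Continuous f ∧ Function.Surjective f

def IsAnalyticSpace (X : Type u) [TopologicalSpace X] : Prop :=
  ∃ (P : Type u) (_ : TopologicalSpace P), PolishSpace P ∧
    ∃ f : P → X, Continuous f ∧ Function.Surjective f

noncomputable def boundingNumber : Cardinal.{0} :=
  sInf {κ : Cardinal.{0} | ∃ B : Set (ℕ → ℕ), #↥B = κ ∧
    ∀ y : ℕ → ℕ, ∃ x ∈ B, {n : ℕ | ¬ x n ≤ y n}.Infinite}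

/-!
Suppose `#f(X) > κ := max (l P) (ψ Y)` and put `h := f ∘ g`. If `B ⊆ P` is closed with
`#h(B) > κ`, then `h(B)` is `κ`-Lindelöf and so has a complete accumulation point `y`. One of the
`≤ κ` open sets cutting out `y` misses `> κ` points of `h(B)`, which have a complete accumulation
point `z ≠ y` of their own. Neighbourhoods of `y` and `z` with disjoint closures split `B` into two
closed pieces with disjoint closed images, each still with `> κ` image points. Because `P` is
`κ`-Lindelöf and `P = ⋂ Gₙ` inside a compactum `K`, the pieces of level `n` can also be shrunk so
that their closures in `K` lie in `Gₙ`. Iterating yields a Cantor scheme whose branches all meet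
one compact subset of `P`; its image `W` in `X` is compact and meets every branch of the scheme
`s ↦ f⁻¹(closure h(Bₛ))`.

A compact scattered set cannot do that. Take a minimal closed `D` still meeting every branch inside
`W` and an isolated point `x` of `W ∩ D`. Removing `x` loses some branch `b`, which must therefore
pass through `x`, and by compactness already a finite level `N` of `b` misses `(W ∩ D) \ {x}`. But
the branch leaving `b` at level `N` meets `W ∩ D` in a point `≠ x` lying in that level.
-/

open Function PiNat

theorem Cardinal.mk_le_of_subset_iUnion {α ι : Type u} {κ : Cardinal.{u}} {S : Set α}
    {T : ι → Set α} (hκ : ℵ₀ ≤ κ) (hι : #ι ≤ κ) (hT : ∀ i, #(T i) ≤ κ) (hS : S ⊆ ⋃ i, T i) :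
    #S ≤ κ :=
  calc #S ≤ #ι * ⨆ i, #(T i) := (mk_le_mk_of_subset hS).trans (mk_iUnion_le T)
    _ ≤ κ * κ := mul_le_mul' hι (ciSup_le' hT)
    _ = κ := mul_eq_self hκ

theorem Cardinal.exists_lt_mk_diff_of_sInter_eq_singleton {α : Type u} {κ : Cardinal.{u}}
    (hκ : ℵ₀ ≤ κ) {y : α} {𝒰 : Set (Set α)} (h𝒰κ : #𝒰 ≤ κ) (h𝒰 : ⋂₀ 𝒰 = {y}) {A : Set α}
    (hA : κ < #A) : ∃ U ∈ 𝒰, κ < #(A \ U : Set α) := by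
  by_contra! hsmall
  have hAcov : A ⊆ insert y (⋃ U : 𝒰, A \ U) := by
    intro a ha
    rcases eq_or_ne a y with rfl | hay
    · exact mem_insert _ _
    · have haU : a ∉ ⋂₀ 𝒰 := by rwa [h𝒰]
      obtain ⟨U, hU, haU⟩ : ∃ U ∈ 𝒰, a ∉ U := by
        simpa only [mem_sInter, not_forall, exists_prop] using haU
      exact mem_insert_of_mem _ (mem_iUnion.2 ⟨⟨U, hU⟩, ha, haU⟩)
  refine hA.not_ge ?_
  calc #A ≤ #(⋃ U : 𝒰, A \ U) + 1 := (mk_le_mk_of_subset hAcov).trans mk_insert_le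
    _ ≤ κ + 1 :=
      add_le_add_left (mk_le_of_subset_iUnion hκ h𝒰κ (fun U => hsmall U U.2) le_rfl) 1
    _ = κ := add_one_eq hκ

def PseudocharacterLE (κ : Cardinal.{u}) (Y : Type u) [TopologicalSpace Y] : Prop :=
  ∀ y : Y, ∃ 𝒰 : Set (Set Y), #𝒰 ≤ κ ∧ (∀ U ∈ 𝒰, IsOpen U ∧ y ∈ U) ∧ ⋂₀ 𝒰 = {y}

theorem PseudocharacterLE.mono {κ μ : Cardinal.{u}} {Y : Type u} [TopologicalSpace Y]
    (hψ : PseudocharacterLE κ Y) (hκμ : κ ≤ μ) : PseudocharacterLE μ Y := fun y =>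
  let ⟨𝒰, h𝒰κ, h𝒰⟩ := hψ y
  ⟨𝒰, h𝒰κ.trans hκμ, h𝒰⟩

theorem pseudocharacterLE_pseudocharacter (Y : Type u) [TopologicalSpace Y] [T1Space Y] :
    PseudocharacterLE (pseudocharacter Y) Y := by
  intro y
  obtain ⟨-, hψ⟩ := csInf_mem (s := {κ : Cardinal.{u} | ℵ₀ ≤ κ ∧ ∀ x : Y, ∃ 𝒰 : Set (Set Y),
      #↥𝒰 ≤ κ ∧ (∀ U ∈ 𝒰, IsOpen U ∧ x ∈ U) ∧ ⋂₀ 𝒰 = ⋂₀ {U : Set Y | IsOpen U ∧ x ∈ U}})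
    ⟨max ℵ₀ #(Set Y), le_max_left _ _,
      fun x => ⟨_, (mk_set_le _).trans (le_max_right _ _), fun _ hU => hU, rfl⟩⟩
  obtain ⟨𝒰, h𝒰κ, h𝒰, h𝒰y⟩ := hψ y
  refine ⟨𝒰, h𝒰κ, h𝒰, h𝒰y.trans ?_⟩
  ext z
  simp only [mem_sInter, mem_ofPred_eq, mem_singleton_iff]
  exact ⟨fun hz => by_contra fun hzy => hz {z}ᶜ ⟨isOpen_compl_singleton, Ne.symm hzy⟩ rfl,
    fun hzy U hU => hzy ▸ hU.2⟩

theorem FunctionallyHausdorff.t25Space {Y : Type u} [TopologicalSpace Y]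
    (hY : FunctionallyHausdorff Y) : T25Space Y := by
  refine ⟨fun x y hxy => ?_⟩
  obtain ⟨φ, hφ, hx, hy⟩ := hY x y hxy
  obtain ⟨u, hxu, hu, v, hyv, hv, huv⟩ :=
    exists_open_nhds_disjoint_closure (show φ x ≠ φ y by simp [hx, hy])
  rw [(𝓝 x).basis_sets.lift'_closure.disjoint_iff (𝓝 y).basis_sets.lift'_closure]
  exact ⟨φ ⁻¹' u, (hu.preimage hφ).mem_nhds hxu, φ ⁻¹' v, (hv.preimage hφ).mem_nhds hyv,
    (huv.preimage φ).mono (hφ.closure_preimage_subset u) (hφ.closure_preimage_subset v)⟩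

section KappaLindelof

variable {X : Type u} [TopologicalSpace X]

def IsKappaLindelof (κ : Cardinal.{u}) (S : Set X) : Prop :=
  ∀ 𝒰 : Set (Set X), (∀ U ∈ 𝒰, IsOpen U) → S ⊆ ⋃₀ 𝒰 → ∃ 𝒱 ⊆ 𝒰, #𝒱 ≤ κ ∧ S ⊆ ⋃₀ 𝒱

namespace IsKappaLindelof

variable {κ : Cardinal.{u}} {S : Set X}

theorem mono (hS : IsKappaLindelof κ S) {μ : Cardinal.{u}} (hκμ : κ ≤ μ) :
    IsKappaLindelof μ S := fun 𝒰 h𝒰 hcov =>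
  let ⟨𝒱, h𝒱, h𝒱κ, hS𝒱⟩ := hS 𝒰 h𝒰 hcov
  ⟨𝒱, h𝒱, h𝒱κ.trans hκμ, hS𝒱⟩

theorem inter_right (hS : IsKappaLindelof κ S) {F : Set X} (hF : IsClosed F) :
    IsKappaLindelof κ (S ∩ F) := by
  intro 𝒰 h𝒰 hcov
  have hcov' : S ⊆ ⋃₀ insert Fᶜ 𝒰 := by
    intro x hx
    by_cases hxF : x ∈ F
    · exact sUnion_mono (subset_insert _ _) (hcov ⟨hx, hxF⟩)
    · exact ⟨Fᶜ, mem_insert _ _, hxF⟩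
  obtain ⟨𝒱, h𝒱, h𝒱κ, hS𝒱⟩ := hS _ (forall_mem_insert.2 ⟨hF.isOpen_compl, h𝒰⟩) hcov'
  refine ⟨𝒱 \ {Fᶜ}, sdiff_singleton_subset_iff.2 h𝒱,
    (mk_le_mk_of_subset sdiff_subset).trans h𝒱κ, ?_⟩
  rintro x ⟨hxS, hxF⟩
  obtain ⟨V, hV, hxV⟩ := hS𝒱 hxS
  exact ⟨V, ⟨hV, by rintro rfl; exact hxV hxF⟩, hxV⟩

theorem image (hS : IsKappaLindelof κ S) {Y : Type u} [TopologicalSpace Y] {f : X → Y}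
    (hf : Continuous f) : IsKappaLindelof κ (f '' S) := by
  intro 𝒞 h𝒞 hcov
  have hcov' : S ⊆ ⋃₀ ((f ⁻¹' ·) '' 𝒞) := fun x hx =>
    let ⟨C, hC, hfx⟩ := hcov (mem_image_of_mem f hx)
    ⟨_, mem_image_of_mem _ hC, hfx⟩
  obtain ⟨𝒱, h𝒱, h𝒱κ, hS𝒱⟩ :=
    hS _ (forall_mem_image.2 fun C hC => (h𝒞 C hC).preimage hf) hcov'
  have h𝒱' : ∀ V ∈ 𝒱, ∃ C ∈ 𝒞, f ⁻¹' C = V := fun V hV => h𝒱 hV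
  choose! c hc hcV using h𝒱'
  refine ⟨c '' 𝒱, image_subset_iff.2 hc, mk_image_le.trans h𝒱κ, ?_⟩
  rintro _ ⟨x, hx, rfl⟩
  obtain ⟨V, hV, hxV⟩ := hS𝒱 hx
  rw [← hcV V hV] at hxV
  exact ⟨c V, mem_image_of_mem c hV, hxV⟩

theorem exists_lt_mk_image_inter (hS : IsKappaLindelof κ S) (hκ : ℵ₀ ≤ κ)
    {𝒰 : Set (Set X)} (h𝒰 : ∀ U ∈ 𝒰, IsOpen U) (hcov : S ⊆ ⋃₀ 𝒰) {Y : Type u} (f : X → Y)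
    {C : Set X} (hCS : C ⊆ S) (hC : κ < #(f '' C)) : ∃ U ∈ 𝒰, κ < #(f '' (C ∩ U)) := by
  by_contra! hsmall
  obtain ⟨𝒱, h𝒱, h𝒱κ, hS𝒱⟩ := hS 𝒰 h𝒰 hcov
  refine hC.not_ge (mk_le_of_subset_iUnion hκ h𝒱κ (fun V : 𝒱 => hsmall V (h𝒱 V.2)) ?_)
  rintro _ ⟨x, hx, rfl⟩
  obtain ⟨V, hV, hxV⟩ := hS𝒱 (hCS hx)
  exact mem_iUnion.2 ⟨⟨V, hV⟩, x, ⟨hx, hxV⟩, rfl⟩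

theorem exists_mem_forall_lt_mk_inter (hS : IsKappaLindelof κ S) (hκ : ℵ₀ ≤ κ)
    (hcard : κ < #S) : ∃ y ∈ S, ∀ V, IsOpen V → y ∈ V → κ < #(S ∩ V : Set X) := by
  by_contra! hsmall
  have hcov : S ⊆ ⋃₀ {V | IsOpen V ∧ #(S ∩ V : Set X) ≤ κ} := fun y hy =>
    let ⟨V, hV, hyV, hVκ⟩ := hsmall y hy
    ⟨V, ⟨hV, hVκ⟩, hyV⟩
  obtain ⟨V, ⟨-, hVκ⟩, hκV⟩ :=
    hS.exists_lt_mk_image_inter hκ (fun V hV => hV.1) hcov id le_rfl (by rwa [image_id])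
  rw [image_id] at hκV
  exact hκV.not_ge hVκ

theorem exists_disjoint_isClosed_lt_mk_inter [T25Space X] (hS : IsKappaLindelof κ S)
    (hκ : ℵ₀ ≤ κ) (hψ : PseudocharacterLE κ X) (hcard : κ < #S) :
    ∃ F₀ F₁ : Set X, IsClosed F₀ ∧ IsClosed F₁ ∧ Disjoint F₀ F₁ ∧
      κ < #(S ∩ F₀ : Set X) ∧ κ < #(S ∩ F₁ : Set X) := by
  obtain ⟨y, -, hy⟩ := hS.exists_mem_forall_lt_mk_inter hκ hcard
  obtain ⟨𝒰, h𝒰κ, h𝒰, h𝒰y⟩ := hψ y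
  obtain ⟨U, hU𝒰, hκU⟩ := exists_lt_mk_diff_of_sInter_eq_singleton hκ h𝒰κ h𝒰y hcard
  obtain ⟨z, ⟨-, hzU⟩, hz⟩ :=
    (hS.inter_right (h𝒰 U hU𝒰).1.isClosed_compl).exists_mem_forall_lt_mk_inter hκ hκU
  have hyz : y ≠ z := fun hyz => hzU (hyz ▸ (h𝒰 U hU𝒰).2)
  obtain ⟨u, hyu, hu, v, hzv, hv, huv⟩ := exists_open_nhds_disjoint_closure hyz
  refine ⟨closure u, closure v, isClosed_closure, isClosed_closure, huv, ?_, ?_⟩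
  · exact (hy u hu hyu).trans_le (mk_le_mk_of_subset (inter_subset_inter_right _ subset_closure))
  · exact (hz v hv hzv).trans_le (mk_le_mk_of_subset fun a ha => ⟨ha.1.1, subset_closure ha.2⟩)

end IsKappaLindelof

end KappaLindelof

theorem lindelofNumber_spec (X : Type u) [TopologicalSpace X] :
    ℵ₀ ≤ lindelofNumber X ∧ IsKappaLindelof (lindelofNumber X) (univ : Set X) := by
  obtain ⟨hκ, hL⟩ := csInf_mem (s := {κ : Cardinal.{u} | ℵ₀ ≤ κ ∧
      ∀ U : Set (Set X), (∀ u ∈ U, IsOpen u) → ⋃₀ U = Set.univ →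
        ∃ V ⊆ U, #↥V ≤ κ ∧ ⋃₀ V = Set.univ})
    ⟨max ℵ₀ #(Set X), le_max_left _ _,
      fun 𝒰 _ hcov => ⟨𝒰, subset_rfl, (mk_set_le 𝒰).trans (le_max_right _ _), hcov⟩⟩
  refine ⟨hκ, fun 𝒰 h𝒰 hcov => ?_⟩
  obtain ⟨𝒱, h𝒱, h𝒱κ, hcov'⟩ := hL 𝒰 h𝒰 (univ_subset_iff.1 hcov)
  exact ⟨𝒱, h𝒱, h𝒱κ, hcov'.ge⟩

section Scattered

variable {X : Type u} [TopologicalSpace X]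

theorem IsCompact.exists_minimal_isClosed_inter_nonempty {ι : Type*} {W : Set X}
    (hW : IsCompact W) {F : ι → Set X} (hF : ∀ i, IsClosed (F i))
    (hWF : ∀ i, (W ∩ F i).Nonempty) :
    ∃ D, Minimal (fun D => IsClosed D ∧ ∀ i, (W ∩ D ∩ F i).Nonempty) D := by
  refine (zorn_superset_nonempty {D | IsClosed D ∧ ∀ i, (W ∩ D ∩ F i).Nonempty} ?_ univ
    ⟨isClosed_univ, by simpa using hWF⟩).imp fun _ => And.right
  rintro c hc hchain ⟨D₀, hD₀⟩
  refine ⟨⋂₀ c, ⟨isClosed_sInter fun D hD => (hc hD).1, fun i => ?_⟩,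
    fun D hD => sInter_subset_of_mem hD⟩
  rw [nonempty_iff_ne_empty]
  intro hempty
  have : Nonempty c := ⟨⟨D₀, hD₀⟩⟩
  have hdir : Directed (· ⊇ ·) fun D : c => (D : Set X) ∩ F i := by
    rintro ⟨D₁, h₁⟩ ⟨D₂, h₂⟩
    rcases hchain.total h₁ h₂ with h | h
    · exact ⟨⟨D₁, h₁⟩, subset_rfl, inter_subset_inter_left _ h⟩
    · exact ⟨⟨D₂, h₂⟩, inter_subset_inter_left _ h, subset_rfl⟩
  obtain ⟨⟨D, hD⟩, hDi⟩ := hW.elim_directed_family_closed _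
    (fun D : c => (hc D.2).1.inter (hF i))
    (by rwa [← iInter_inter, ← sInter_eq_iInter, ← inter_assoc]) hdir
  exact ((hc hD).2 i).ne_empty (by rwa [inter_assoc])

theorem IsCompact.exists_branch_inter_eq_empty {W : Set X} (hW : IsCompact W)
    (hscat : IsScatteredSet W) {A : List Bool → Set X} (hAc : ∀ s, IsClosed (A s))
    (hA : CantorScheme.Antitone A) (hAd : CantorScheme.Disjoint A) :
    ∃ b : ℕ → Bool, W ∩ ⋂ n, A (res b n) = ∅ := by
  by_contra! hbranch
  obtain ⟨D, ⟨hDc, hD⟩, hDmin⟩ := hW.exists_minimal_isClosed_inter_nonempty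
    (fun b => isClosed_iInter fun n => hAc (res b n)) hbranch
  obtain ⟨x, ⟨hxW, hxD⟩, U, hU, hUx⟩ :=
    hscat (W ∩ D) inter_subset_left ((hD fun _ => false).mono inter_subset_left)
  have hxU : x ∈ U := (hUx.symm ▸ mem_singleton x : x ∈ U ∩ (W ∩ D)).1
  have hU_compl : ∀ y ∈ W ∩ D, y ≠ x → y ∈ Uᶜ := fun y hy hyx hyU =>
    hyx (hUx.subset ⟨hyU, hy⟩)
  obtain ⟨b, hb⟩ : ∃ b, W ∩ (D ∩ Uᶜ) ∩ ⋂ n, A (res b n) = ∅ := by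
    by_contra! h
    exact (hDmin ⟨hDc.inter hU.isClosed_compl, h⟩ inter_subset_left hxD).2 hxU
  have hxb : x ∈ ⋂ n, A (res b n) := by
    obtain ⟨y, ⟨hyW, hyD⟩, hyb⟩ := hD b
    obtain rfl : y = x := by_contra fun hyx =>
      hb.subset ⟨⟨hyW, hyD, hU_compl y ⟨hyW, hyD⟩ hyx⟩, hyb⟩
    exact hyb
  obtain ⟨N, hN⟩ : ∃ N, W ∩ (D ∩ Uᶜ ∩ A (res b N)) = ∅ :=
    hW.elim_directed_family_closed _ (fun n => (hDc.inter hU.isClosed_compl).inter (hAc _))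
      (by rwa [← inter_iInter, ← inter_assoc])
      (antitone_nat_of_succ_le fun n => inter_subset_inter_right _ (hA _ _)).directed_ge
  set b' := update b N (!b N)
  have hres : res b' N = res b N := res_eq_res.2 fun m hm => update_of_ne hm.ne _ _
  obtain ⟨y, ⟨hyW, hyD⟩, hyb⟩ := hD b'
  have hyx : y ≠ x := by
    rintro rfl
    have hy' : y ∈ A ((!b N) :: res b N) := by
      simpa [b', res_succ, hres] using mem_iInter.1 hyb (N + 1)
    exact (hAd (res b N) (by simp)).ne_of_mem (mem_iInter.1 hxb (N + 1)) hy' rfl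
  have hyN : y ∈ A (res b N) := hres ▸ mem_iInter.1 hyb N
  exact hN.subset ⟨hyW, ⟨hyD, hU_compl y ⟨hyW, hyD⟩ hyx⟩, hyN⟩

end Scattered

section CantorScheme

variable {P K Y : Type u} [TopologicalSpace P] [TopologicalSpace K]
  {κ : Cardinal.{u}} {h : P → Y} {e : P → K} {G : ℕ → Set K}

/-- A node of level `n` of the Cantor scheme built in `P` from the Gδ set `⋂ Gₙ ⊆ K`. -/
structure SchemeNode (κ : Cardinal.{u}) (h : P → Y) (e : P → K) (G : ℕ → Set K) (n : ℕ) where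
  carrier : Set P
  isClosed : IsClosed carrier
  lt_mk_image : κ < #(h '' carrier)
  closure_image_subset : closure (e '' carrier) ⊆ G n

namespace SchemeNode

theorem nonempty {n : ℕ} (N : SchemeNode κ h e G n) : N.carrier.Nonempty :=
  nonempty_iff_ne_empty.2 fun hN => by simpa [hN] using N.lt_mk_image

theorem exists_subset [RegularSpace K] (hκ : ℵ₀ ≤ κ) (hP : IsKappaLindelof κ (univ : Set P))
    (he : Continuous e) (hGo : ∀ n, IsOpen (G n)) (hGe : ∀ n, range e ⊆ G n) (n : ℕ)
    {C : Set P} (hC : IsClosed C) (hCκ : κ < #(h '' C)) :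
    ∃ N : SchemeNode κ h e G n, N.carrier ⊆ C := by
  have hcov : (univ : Set P) ⊆ ⋃₀ ((e ⁻¹' ·) '' {W | IsOpen W ∧ closure W ⊆ G n}) := by
    intro p _
    obtain ⟨t, ht, htc, htG⟩ :=
      exists_mem_nhds_isClosed_subset ((hGo n).mem_nhds (hGe n (mem_range_self p)))
    exact ⟨e ⁻¹' interior t, mem_image_of_mem _
      ⟨isOpen_interior, (closure_minimal interior_subset htc).trans htG⟩,
      mem_interior_iff_mem_nhds.2 ht⟩
  obtain ⟨_, ⟨W, ⟨-, hWG⟩, rfl⟩, hκW⟩ := hP.exists_lt_mk_image_inter hκ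
    (forall_mem_image.2 fun W hW => hW.1.preimage he) hcov h (subset_univ C) hCκ
  refine ⟨⟨closure (C ∩ e ⁻¹' W), isClosed_closure,
    hκW.trans_le (mk_le_mk_of_subset (image_mono subset_closure)), ?_⟩,
    closure_minimal inter_subset_left hC⟩
  rw [closure_image_closure he]
  exact (closure_mono (image_subset_iff.2 inter_subset_right)).trans hWG

theorem exists_children [TopologicalSpace Y] [RegularSpace K] [T25Space Y] (hκ : ℵ₀ ≤ κ)
    (hψ : PseudocharacterLE κ Y) (hP : IsKappaLindelof κ (univ : Set P)) (he : Continuous e)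
    (hGo : ∀ n, IsOpen (G n)) (hGe : ∀ n, range e ⊆ G n) (hh : Continuous h) {n : ℕ}
    (N : SchemeNode κ h e G n) :
    ∃ c : Bool → SchemeNode κ h e G (n + 1), (∀ i, (c i).carrier ⊆ N.carrier) ∧
      Pairwise (Disjoint on fun i => closure (h '' (c i).carrier)) := by
  have hN : IsKappaLindelof κ (h '' N.carrier) := by
    simpa using (hP.inter_right N.isClosed).image hh
  obtain ⟨F₀, F₁, hF₀, hF₁, hF, h₀, h₁⟩ :=
    hN.exists_disjoint_isClosed_lt_mk_inter hκ hψ N.lt_mk_image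
  have child : ∀ F, IsClosed F → κ < #(h '' N.carrier ∩ F : Set Y) →
      ∃ M : SchemeNode κ h e G (n + 1), M.carrier ⊆ N.carrier ∧
        closure (h '' M.carrier) ⊆ F := by
    intro F hF hκF
    rw [← image_inter_preimage] at hκF
    obtain ⟨M, hM⟩ :=
      exists_subset hκ hP he hGo hGe (n + 1) (N.isClosed.inter (hF.preimage hh)) hκF
    exact ⟨M, hM.trans inter_subset_left,
      closure_minimal (image_subset_iff.2 (hM.trans inter_subset_right)) hF⟩
  obtain ⟨M₀, hM₀N, hM₀F⟩ := child F₀ hF₀ h₀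
  obtain ⟨M₁, hM₁N, hM₁F⟩ := child F₁ hF₁ h₁
  refine ⟨fun i => bif i then M₁ else M₀, Bool.forall_bool.2 ⟨hM₀N, hM₁N⟩, ?_⟩
  rintro (_ | _) (_ | _) hij
  · exact absurd rfl hij
  · exact hF.mono hM₀F hM₁F
  · exact hF.symm.mono hM₁F hM₀F
  · exact absurd rfl hij

def tree (c : ∀ n, SchemeNode κ h e G n → Bool → SchemeNode κ h e G (n + 1))
    (root : SchemeNode κ h e G 0) : (s : List Bool) → SchemeNode κ h e G s.length
  | [] => root
  | i :: s => c s.length (tree c root s) i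

end SchemeNode

theorem exists_cantorScheme [TopologicalSpace Y] [RegularSpace K] [T25Space Y] (hκ : ℵ₀ ≤ κ)
    (hψ : PseudocharacterLE κ Y) (hP : IsKappaLindelof κ (univ : Set P)) (he : Continuous e)
    (hGo : ∀ n, IsOpen (G n)) (hGe : ∀ n, range e ⊆ G n) (hh : Continuous h)
    (hκh : κ < #(range h)) :
    ∃ B : List Bool → Set P, (∀ s, IsClosed (B s)) ∧ CantorScheme.Antitone B ∧
      (∀ s, (B s).Nonempty) ∧ (∀ s, closure (e '' B s) ⊆ G s.length) ∧
      CantorScheme.Disjoint fun s => closure (h '' B s) := by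
  choose c hcN hc using
    fun n (N : SchemeNode κ h e G n) => N.exists_children hκ hψ hP he hGo hGe hh
  obtain ⟨root, -⟩ :=
    SchemeNode.exists_subset hκ hP he hGo hGe 0 isClosed_univ (by rwa [image_univ])
  let B s := SchemeNode.tree c root s
  exact ⟨fun s => (B s).carrier, fun s => (B s).isClosed, fun s i => hcN _ _ i,
    fun s => (B s).nonempty, fun s => (B s).closure_image_subset, fun s => hc _ _⟩

theorem Topology.IsEmbedding.exists_isCompact_forall_branch_nonempty [CompactSpace K]
    (he : IsEmbedding e) (hG : range e = ⋂ n, G n) {B : List Bool → Set P}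
    (hBc : ∀ s, IsClosed (B s)) (hB : CantorScheme.Antitone B) (hBne : ∀ s, (B s).Nonempty)
    (hBG : ∀ s, closure (e '' B s) ⊆ G s.length) :
    ∃ W : Set P, IsCompact W ∧ ∀ b : ℕ → Bool, (W ∩ ⋂ n, B (res b n)).Nonempty := by
  set C : Set K := ⋂ n, ⋃ s ∈ {s : List Bool | s.length = n}, closure (e '' B s)
  have hC : IsClosed C := isClosed_iInter fun n =>
    (List.finite_length_eq Bool n).isClosed_biUnion fun _ _ => isClosed_closure
  have hCe : C ⊆ range e := by
    rw [hG]
    refine fun k hk => mem_iInter.2 fun n => ?_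
    obtain ⟨s, rfl, hks⟩ := mem_iUnion₂.1 (mem_iInter.1 hk n)
    exact hBG s hks
  have hpull : ∀ s p, e p ∈ closure (e '' B s) → p ∈ B s := fun s p hp => by
    rwa [← (hBc s).closure_eq, he.closure_eq_preimage_closure_image]
  refine ⟨e ⁻¹' C, ?_, fun b => ?_⟩
  · rw [he.isCompact_iff, image_preimage_eq_of_subset hCe]
    exact hC.isCompact
  obtain ⟨k, hk⟩ := IsCompact.nonempty_iInter_of_sequence_nonempty_isCompact_isClosed
    (fun n => closure (e '' B (res b n))) (fun n => closure_mono (image_mono (hB _ _)))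
    (fun n => ((hBne _).image e).closure) isClosed_closure.isCompact fun _ => isClosed_closure
  have hkC : k ∈ C :=
    mem_iInter.2 fun n => mem_iUnion₂.2 ⟨res b n, res_length b n, mem_iInter.1 hk n⟩
  obtain ⟨p, rfl⟩ := hCe hkC
  exact ⟨p, hkC, mem_iInter.2 fun n => hpull _ _ (mem_iInter.1 hk n)⟩

end CantorScheme

theorem stmt2 {X P Y : Type u} [TopologicalSpace X] [TopologicalSpace P] [TopologicalSpace Y]
    (hP : IsCechComplete P) (g : P → X) (hg : Continuous g) (hgs : Function.Surjective g)
    (hscat : ∀ K : Set X, IsCompact K → IsScatteredSet K)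
    (hY : FunctionallyHausdorff Y) (f : X → Y) (hf : Continuous f) :
    #↥(Set.range f) ≤ max (lindelofNumber P) (pseudocharacter Y) := by
  set κ := max (lindelofNumber P) (pseudocharacter Y)
  obtain ⟨hℵ₀, hL⟩ := lindelofNumber_spec P
  have hκ : ℵ₀ ≤ κ := hℵ₀.trans (le_max_left _ _)
  have := hY.t25Space
  by_contra! hκf
  obtain ⟨K, _, e, _, _, he, -, hGδ⟩ := hP
  obtain ⟨G, hGo, hG⟩ := isGδ_iff_eq_iInter_nat.mp hGδ
  have hrange : range (f ∘ g) = range f := by rw [range_comp, hgs.range_eq, image_univ]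
  obtain ⟨B, hBc, hB, hBne, hBG, hBd⟩ := exists_cantorScheme hκ
    ((pseudocharacterLE_pseudocharacter Y).mono (le_max_right _ _)) (hL.mono (le_max_left _ _))
    he.continuous hGo (fun n => hG ▸ iInter_subset G n) (hf.comp hg) (hrange ▸ hκf)
  obtain ⟨W, hW, hWB⟩ := he.exists_isCompact_forall_branch_nonempty hG hBc hB hBne hBG
  obtain ⟨b, hb⟩ := (hW.image hg).exists_branch_inter_eq_empty (hscat _ (hW.image hg))
    (A := fun s => f ⁻¹' closure (f ∘ g '' B s)) (fun s => isClosed_closure.preimage hf)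
    (fun s i => preimage_mono (closure_mono (image_mono (hB s i))))
    (fun s i j hij => (hBd s hij).preimage f)
  obtain ⟨p, hpW, hpB⟩ := hWB b
  exact hb.subset ⟨mem_image_of_mem g hpW,
    mem_iInter.2 fun n => subset_closure (mem_image_of_mem (f ∘ g) (mem_iInter.1 hpB n))⟩
end

section
/- A compact Hausdorff space X is scattered if and only if no continuous map f : X → [0,1] is surjective. -/
open Cardinal Set Topology

universe u

private theorem stmt17_aux_fwd {X : Type u} [TopologicalSpace X] [CompactSpace X] [T2Space X]
    (hs : IsScatteredSet (Set.univ : Set X)) :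
    ¬ ∃ f : X → unitInterval, Continuous f ∧ Function.Surjective f := by
  rintro ⟨f, hf, hsurj⟩
  set S : Set (Set X) := {K | IsClosed K ∧ f '' K = Set.univ} with hS
  have hfib : ∀ (t : unitInterval) (K : Set X), K ∈ S → (K ∩ f ⁻¹' {t}).Nonempty := by
    rintro t K ⟨hKc, hKim⟩
    have : t ∈ f '' K := hKim ▸ mem_univ t
    obtain ⟨x, hx, hfx⟩ := this
    exact ⟨x, hx, by simp [hfx]⟩
  obtain ⟨K, hKmin⟩ : ∃ m, Minimal (· ∈ S) m := by
    apply zorn_superset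
    intro c hcS hchain
    rcases c.eq_empty_or_nonempty with rfl | hcne
    · exact ⟨univ, ⟨isClosed_univ, by rw [image_univ, Set.range_eq_univ]; exact hsurj⟩,
        by simp⟩
    · have hne : Nonempty c := hcne.coe_sort
      refine ⟨⋂₀ c, ⟨isClosed_sInter fun K hK => (hcS hK).1, ?_⟩, fun s hs => sInter_subset_of_mem hs⟩
      apply eq_univ_of_forall
      intro t
      have key : (⋂ K : c, ((K : Set X) ∩ f ⁻¹' {t})).Nonempty := by
        apply IsCompact.nonempty_iInter_of_directed_nonempty_isCompact_isClosed
        · intro K1 K2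
          rcases hchain.total K1.2 K2.2 with h | h
          · exact ⟨K1, Subset.rfl, inter_subset_inter_left _ h⟩
          · exact ⟨K2, inter_subset_inter_left _ h, Subset.rfl⟩
        · exact fun K => hfib t K (hcS K.2)
        · intro K
          exact ((hcS K.2).1.inter (isClosed_singleton.preimage hf)).isCompact
        · exact fun K => (hcS K.2).1.inter (isClosed_singleton.preimage hf)
      obtain ⟨x, hx⟩ := key
      simp only [mem_iInter, mem_inter_iff, mem_preimage, mem_singleton_iff] at hx
      refine ⟨x, ?_, (hx ⟨_, hcne.choose_spec⟩).2⟩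
      intro K hK
      exact (hx ⟨K, hK⟩).1
  obtain ⟨hKcl, hKim⟩ := hKmin.prop
  have hKne : K.Nonempty := by
    obtain ⟨x, hx, _⟩ := hfib 0 K hKmin.prop
    exact ⟨x, hx⟩
  obtain ⟨x0, hx0K, U, hUo, hUK⟩ := hs K (subset_univ K) hKne
  have hx0U : x0 ∈ U := by
    have : x0 ∈ U ∩ K := hUK ▸ rfl
    exact this.1
  set K' : Set X := K ∩ Uᶜ with hK'
  have hK'cl : IsClosed K' := hKcl.inter hUo.isClosed_compl
  have hK'im : f '' K' ≠ Set.univ := by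
    intro h
    have hmem : K' ∈ S := ⟨hK'cl, h⟩
    have := hKmin.2 hmem inter_subset_left
    have hx0K' : x0 ∈ K' := this hx0K
    exact hx0K'.2 hx0U
  obtain ⟨t, ht⟩ : ∃ t, t ∉ f '' K' := by
    by_contra h
    push_neg at h
    exact hK'im (eq_univ_of_forall h)
  have hWopen : IsOpen ((f '' K')ᶜ) := by
    have : IsCompact (f '' K') := (hK'cl.isCompact.image hf)
    exact this.isClosed.isOpen_compl
  have hWsub : (f '' K')ᶜ = {t} := by
    apply Subset.antisymm
    · intro w hw
      have : w ∈ f '' K := hKim ▸ mem_univ w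
      obtain ⟨y, hyK, hfy⟩ := this
      have hyU : y ∈ U := by
        by_contra hyU
        exact hw ⟨y, ⟨hyK, hyU⟩, hfy⟩
      have hy : y = x0 := by
        have : y ∈ U ∩ K := ⟨hyU, hyK⟩
        rw [hUK] at this
        exact this
      have : t ∈ f '' K := hKim ▸ mem_univ t
      obtain ⟨z, hzK, hfz⟩ := this
      have hzU : z ∈ U := by
        by_contra hzU
        exact ht ⟨z, ⟨hzK, hzU⟩, hfz⟩
      have hz : z = x0 := by
        have : z ∈ U ∩ K := ⟨hzU, hzK⟩
        rw [hUK] at this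
        exact this
      rw [mem_singleton_iff, ← hfy, ← hfz, hy, hz]
    · intro w hw
      simp only [mem_singleton_iff] at hw
      subst hw
      exact ht
  have hclopen : IsClopen ({t} : Set unitInterval) := ⟨isClosed_singleton, hWsub ▸ hWopen⟩
  rcases isClopen_iff.mp hclopen with h | h
  · exact (singleton_nonempty t).ne_empty h
  · rcases eq_or_ne t 0 with rfl | h0
    · have : (1 : unitInterval) ∈ ({0} : Set unitInterval) := h ▸ mem_univ _
      simp only [mem_singleton_iff] at this
      exact one_ne_zero (by exact_mod_cast congrArg Subtype.val this)
    · have : (0 : unitInterval) ∈ ({t} : Set unitInterval) := h ▸ mem_univ _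
      simp only [mem_singleton_iff] at this
      exact h0 this.symm



private def branchList (b : ℕ → Bool) : ℕ → List Bool
  | 0 => []
  | n + 1 => b n :: branchList b n

private lemma branchList_length (b : ℕ → Bool) (n : ℕ) : (branchList b n).length = n := by
  induction n with
  | zero => rfl
  | succ n ih => simp [branchList, ih]

private lemma finite_length_eq (n : ℕ) : {l : List Bool | l.length = n}.Finite := by
  induction n with
  | zero =>
    have : {l : List Bool | l.length = 0} = {[]} := by
      ext l; simp [List.length_eq_zero_iff]
    rw [this]; exact Set.finite_singleton _
  | succ n ih =>
    have : {l : List Bool | l.length = n + 1} =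
        ⋃ b : Bool, (fun t => b :: t) '' {l : List Bool | l.length = n} := by
      ext l
      simp only [mem_setOf_eq, Set.mem_iUnion, Set.mem_image]
      constructor
      · intro hl
        match l, hl with
        | b :: t, hl => exact ⟨b, t, by simpa using hl, rfl⟩
      · rintro ⟨b, t, ht, rfl⟩
        simp [ht]
    rw [this]
    exact Set.finite_iUnion fun b => ih.image _

private def consSeq (c : Bool) (b : ℕ → Bool) : ℕ → Bool
  | 0 => c
  | n + 1 => b n

/-- weight -/
private noncomputable def wt (n : ℕ) : ℝ := 1 / 2 / 2 ^ n

private lemma wt_pos (n : ℕ) : 0 < wt n := by unfold wt; positivity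

private lemma summable_wt : Summable wt := summable_geometric_two' 1

private lemma tsum_wt : ∑' n, wt n = 1 := tsum_geometric_two' 1

private lemma summable_bd {h : ℕ → ℝ} (hb : ∀ n, |h n| ≤ 1) :
    Summable fun n => h n * wt n := by
  apply Summable.of_norm
  apply Summable.of_nonneg_of_le (fun n => norm_nonneg _) _ summable_wt
  intro n
  rw [Real.norm_eq_abs, abs_mul, abs_of_pos (wt_pos n)]
  calc |h n| * wt n ≤ 1 * wt n := by
        exact mul_le_mul_of_nonneg_right (hb n) (wt_pos n).le
    _ = wt n := one_mul _

private noncomputable def GG (b : ℕ → Bool) : ℝ := ∑' n, (cond (b n) 1 0 : ℝ) * wt n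

private lemma cond_abs_le (v : Bool) : |(cond v 1 0 : ℝ)| ≤ 1 := by
  cases v <;> norm_num

private lemma summable_GG (b : ℕ → Bool) :
    Summable fun n => (cond (b n) 1 0 : ℝ) * wt n :=
  summable_bd fun n => cond_abs_le _

private lemma GG_false : GG (fun _ => false) = 0 := by
  unfold GG
  simp

private lemma GG_cons (c : Bool) (b : ℕ → Bool) :
    GG (consSeq c b) = (cond c 1 0 : ℝ) / 2 + GG b / 2 := by
  unfold GG
  rw [Summable.tsum_eq_zero_add (summable_GG (consSeq c b))]
  have h0 : (cond (consSeq c b 0) 1 0 : ℝ) * wt 0 = (cond c 1 0 : ℝ) / 2 := by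
    cases c <;> norm_num [consSeq, wt]
  have h1 : ∀ n : ℕ, (cond (consSeq c b (n + 1)) 1 0 : ℝ) * wt (n + 1) =
      ((cond (b n) 1 0 : ℝ) * wt n) * (1 / 2) := by
    intro n
    simp only [consSeq, wt]
    ring
  rw [h0, tsum_congr h1, tsum_mul_right]
  have : (∑' n, (cond (b n) 1 0 : ℝ) * wt n) = GG b := rfl
  rw [this]
  ring

private lemma GG_continuous : Continuous GG := by
  apply continuous_tsum (u := wt)
  · intro n
    exact ((continuous_of_discreteTopology
      (f := fun v : Bool => (cond v 1 0 : ℝ))).comp (continuous_apply n)).mul continuous_const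
  · exact summable_wt
  · intro n b
    rw [Real.norm_eq_abs, abs_mul, abs_of_pos (wt_pos n)]
    calc |(cond (b n) 1 0 : ℝ)| * wt n ≤ 1 * wt n :=
          mul_le_mul_of_nonneg_right (cond_abs_le _) (wt_pos n).le
      _ = wt n := one_mul _

private lemma GG_approx : ∀ (n : ℕ), ∀ t : ℝ, t ∈ Icc (0:ℝ) 1 →
    ∃ s ∈ Set.range GG, |t - s| ≤ 1 / 2 ^ n := by
  intro n
  induction n with
  | zero =>
    intro t ht
    refine ⟨0, ⟨fun _ => false, GG_false⟩, ?_⟩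
    rw [sub_zero, pow_zero]
    rw [abs_le]
    exact ⟨by linarith [ht.1], by linarith [ht.2]⟩
  | succ n ih =>
    intro t ht
    obtain ⟨ht0, ht1⟩ := ht
    by_cases hc : t ≤ 1 / 2
    · obtain ⟨s, ⟨b, hb⟩, hle⟩ := ih (2 * t) ⟨by linarith, by linarith⟩
      refine ⟨s / 2, ⟨consSeq false b, by rw [GG_cons, hb]; simp⟩, ?_⟩
      calc |t - s / 2| = |2 * t - s| / 2 := by
            rw [show t - s / 2 = (2 * t - s) / 2 by ring, abs_div, abs_two]
        _ ≤ (1 / 2 ^ n) / 2 := by linarith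
        _ = 1 / 2 ^ (n + 1) := by ring
    · obtain ⟨s, ⟨b, hb⟩, hle⟩ := ih (2 * t - 1) ⟨by linarith, by linarith⟩
      refine ⟨1 / 2 + s / 2, ⟨consSeq true b, by rw [GG_cons, hb]; norm_num⟩, ?_⟩
      calc |t - (1 / 2 + s / 2)| = |2 * t - 1 - s| / 2 := by
            rw [show t - (1 / 2 + s / 2) = (2 * t - 1 - s) / 2 by ring, abs_div, abs_two]
        _ ≤ (1 / 2 ^ n) / 2 := by linarith
        _ = 1 / 2 ^ (n + 1) := by ring

private lemma GG_surj_Icc : ∀ t : ℝ, t ∈ Icc (0:ℝ) 1 → t ∈ Set.range GG := by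
  intro t ht
  have hclosed : IsClosed (Set.range GG) := (isCompact_range GG_continuous).isClosed
  rw [← hclosed.closure_eq]
  rw [Metric.mem_closure_iff]
  intro ε hε
  obtain ⟨n, hn⟩ : ∃ n : ℕ, (1 / 2 : ℝ) ^ n < ε := exists_pow_lt_of_lt_one hε one_half_lt_one
  obtain ⟨s, hs, hle⟩ := GG_approx n t ht
  refine ⟨s, hs, ?_⟩
  rw [Real.dist_eq]
  calc |t - s| ≤ 1 / 2 ^ n := hle
    _ = (1 / 2 : ℝ) ^ n := by rw [div_pow, one_pow]
    _ < ε := hn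

private theorem stmt17_aux_bwd {X : Type u} [TopologicalSpace X] [CompactSpace X] [T2Space X]
    (hs : ¬ IsScatteredSet (Set.univ : Set X)) :
    ∃ f : X → unitInterval, Continuous f ∧ Function.Surjective f := by
  -- extract a nonempty closed set with no isolated points
  unfold IsScatteredSet at hs
  push_neg at hs
  obtain ⟨T, -, hTne, hT⟩ := hs
  set A : Set X := closure T with hA
  have hAcl : IsClosed A := isClosed_closure
  have hAne : A.Nonempty := hTne.mono subset_closure
  have hperf : ∀ x ∈ A, ∀ U : Set X, IsOpen U → x ∈ U → ∃ y, y ∈ A ∩ U ∧ y ≠ x := by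
    intro x hx U hU hxU
    have hUT : (U ∩ T).Nonempty := mem_closure_iff.mp hx U hU hxU
    by_cases hxT : x ∈ T
    · have hne : U ∩ T ≠ {x} := hT x hxT U hU
      by_cases h : ∃ y ∈ U ∩ T, y ≠ x
      · obtain ⟨y, hy, hyx⟩ := h
        exact ⟨y, ⟨subset_closure hy.2, hy.1⟩, hyx⟩
      · push_neg at h
        exact absurd (Subset.antisymm h (fun z hz => by
          obtain rfl : z = x := hz
          exact ⟨hxU, hxT⟩)) hne
    · obtain ⟨y, hy⟩ := hUT
      exact ⟨y, ⟨subset_closure hy.2, hy.1⟩, fun h => hxT (h ▸ hy.2)⟩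
  -- child choice
  have key : ∀ V : Set X, ∃ W : Bool → Set X, IsOpen V → (A ∩ V).Nonempty →
      ((∀ b, IsOpen (W b) ∧ (A ∩ W b).Nonempty ∧ closure (W b) ⊆ V) ∧
        Disjoint (closure (W false)) (closure (W true))) := by
    intro V
    by_cases hV : IsOpen V ∧ (A ∩ V).Nonempty
    · obtain ⟨hVo, x, hxA, hxV⟩ := hV
      obtain ⟨y, ⟨hyA, hyV⟩, hyx⟩ := hperf x hxA V hVo hxV
      obtain ⟨Ux, Uy, hUxo, hUyo, hyUx, hxUy, hUxy⟩ := t2_separation hyx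
      -- y ∈ Ux, x ∈ Uy here (t2_separation y x order); careful: t2_separation (h : y ≠ x)
      -- gives u v open, y ∈ u, x ∈ v, disjoint
      obtain ⟨tx, htx_nhds, htx_cl, htx_sub⟩ :=
        exists_mem_nhds_isClosed_subset ((hVo.inter hUyo).mem_nhds ⟨hxV, hxUy⟩)
      obtain ⟨ty, hty_nhds, hty_cl, hty_sub⟩ :=
        exists_mem_nhds_isClosed_subset ((hVo.inter hUxo).mem_nhds ⟨hyV, hyUx⟩)
      refine ⟨fun b => cond b (interior ty) (interior tx), fun _ _ => ⟨?_, ?_⟩⟩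
      · intro b
        cases b
        · refine ⟨isOpen_interior, ⟨x, hxA, mem_interior_iff_mem_nhds.2 htx_nhds⟩, ?_⟩
          calc closure (interior tx) ⊆ closure tx := closure_mono interior_subset
            _ = tx := htx_cl.closure_eq
            _ ⊆ V := fun z hz => (htx_sub hz).1
        · refine ⟨isOpen_interior, ⟨y, hyA, mem_interior_iff_mem_nhds.2 hty_nhds⟩, ?_⟩
          calc closure (interior ty) ⊆ closure ty := closure_mono interior_subset
            _ = ty := hty_cl.closure_eq
            _ ⊆ V := fun z hz => (hty_sub hz).1
      · simp only [cond]
        have h1 : closure (interior tx) ⊆ Uy := by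
          calc closure (interior tx) ⊆ closure tx := closure_mono interior_subset
            _ = tx := htx_cl.closure_eq
            _ ⊆ Uy := fun z hz => (htx_sub hz).2
        have h2 : closure (interior ty) ⊆ Ux := by
          calc closure (interior ty) ⊆ closure ty := closure_mono interior_subset
            _ = ty := hty_cl.closure_eq
            _ ⊆ Ux := fun z hz => (hty_sub hz).2
        exact Set.disjoint_of_subset h1 h2 hUxy.symm
    · exact ⟨fun _ => ∅, fun h1 h2 => absurd ⟨h1, h2⟩ hV⟩
  choose D hD using key
  let V : List Bool → Set X := fun s => List.foldr (fun b acc => D acc b) Set.univ s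
  have hVnil : V [] = Set.univ := rfl
  have hVcons : ∀ (b : Bool) (s : List Bool), V (b :: s) = D (V s) b := fun _ _ => rfl
  have good : ∀ s : List Bool, IsOpen (V s) ∧ (A ∩ V s).Nonempty := by
    intro s
    induction s with
    | nil =>
      refine ⟨by rw [hVnil]; exact isOpen_univ, ?_⟩
      rw [hVnil, Set.inter_univ]
      exact hAne
    | cons b s ih =>
      have h := (hD (V s) ih.1 ih.2).1 b
      exact ⟨h.1, h.2.1⟩
  have hsub : ∀ (b : Bool) (s : List Bool), closure (V (b :: s)) ⊆ V s := by
    intro b s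
    exact ((hD (V s) (good s).1 (good s).2).1 b).2.2
  have hdisj0 : ∀ s : List Bool,
      Disjoint (closure (V (false :: s))) (closure (V (true :: s))) := by
    intro s
    exact (hD (V s) (good s).1 (good s).2).2
  have hdisj : ∀ s t : List Bool, s.length = t.length → s ≠ t →
      Disjoint (closure (V s)) (closure (V t)) := by
    intro s
    induction s with
    | nil =>
      intro t hlen hne
      cases t with
      | nil => exact absurd rfl hne
      | cons b t => simp at hlen
    | cons a s ih =>
      intro t hlen hne
      cases t with
      | nil => simp at hlen
      | cons c t =>
        simp only [List.length_cons, Nat.add_right_cancel_iff] at hlen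
        by_cases hst : s = t
        · subst hst
          have hac : a ≠ c := fun h => hne (h ▸ rfl)
          cases a <;> cases c
          · exact absurd rfl hac
          · exact hdisj0 s
          · exact (hdisj0 s).symm
          · exact absurd rfl hac
        · have h := ih t hlen hst
          exact Set.disjoint_of_subset
            ((hsub a s).trans subset_closure) ((hsub c t).trans subset_closure) h
  -- level sets
  let Z : Bool → ℕ → Set X := fun b n =>
    ⋃ s ∈ {l : List Bool | l.length = n}, A ∩ closure (V (b :: s))
  have hZclosed : ∀ b n, IsClosed (Z b n) := by
    intro b n
    exact (finite_length_eq n).isClosed_biUnion fun s _ => hAcl.inter isClosed_closure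
  have hZdisj : ∀ n, Disjoint (Z false n) (Z true n) := by
    intro n
    rw [Set.disjoint_left]
    intro x hx hx'
    simp only [Z, mem_iUnion, mem_setOf_eq] at hx hx'
    obtain ⟨s, hslen, -, hxs⟩ := hx
    obtain ⟨t, htlen, -, hxt⟩ := hx'
    have : (false :: s) ≠ (true :: t) := by simp
    have hd := hdisj (false :: s) (true :: t) (by simp [hslen, htlen]) this
    exact Set.disjoint_left.mp hd hxs hxt
  -- Urysohn functions
  choose g hg0 hg1 hgmem using fun n =>
    exists_continuous_zero_one_of_isClosed (hZclosed false n) (hZclosed true n) (hZdisj n)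
  let F : X → ℝ := fun x => ∑' n, g n x * wt n
  have hFb : ∀ x, ∀ n : ℕ, |g n x| ≤ 1 := by
    intro x n
    have := hgmem n x
    rw [abs_le]
    exact ⟨by linarith [this.1], this.2⟩
  have hFsummable : ∀ x, Summable fun n => g n x * wt n := fun x => summable_bd (hFb x)
  have hF0 : ∀ x, 0 ≤ F x :=
    fun x => tsum_nonneg fun n => mul_nonneg (hgmem n x).1 (wt_pos n).le
  have hF1 : ∀ x, F x ≤ 1 := by
    intro x
    rw [← tsum_wt]
    apply Summable.tsum_le_tsum _ (hFsummable x) summable_wt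
    intro n
    calc g n x * wt n ≤ 1 * wt n :=
          mul_le_mul_of_nonneg_right (hgmem n x).2 (wt_pos n).le
      _ = wt n := one_mul _
  have hFcont : Continuous F := by
    apply continuous_tsum (u := wt)
    · exact fun n => ((g n).continuous).mul continuous_const
    · exact summable_wt
    · intro n x
      rw [Real.norm_eq_abs, abs_mul, abs_of_pos (wt_pos n)]
      calc |g n x| * wt n ≤ 1 * wt n :=
            mul_le_mul_of_nonneg_right (hFb x n) (wt_pos n).le
        _ = wt n := one_mul _
  -- every branch value is attained
  have hbranch : ∀ b : ℕ → Bool, ∃ x, F x = GG b := by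
    intro b
    have hnonempty : (⋂ n : ℕ, A ∩ closure (V (branchList b n))).Nonempty := by
      apply IsCompact.nonempty_iInter_of_sequence_nonempty_isCompact_isClosed
      · intro n
        apply inter_subset_inter_right
        calc closure (V (branchList b (n + 1))) = closure (V (b n :: branchList b n)) := rfl
          _ ⊆ V (branchList b n) := hsub _ _
          _ ⊆ closure (V (branchList b n)) := subset_closure
      · intro n
        exact (good (branchList b n)).2.mono (inter_subset_inter_right _ subset_closure)
      · exact (hAcl.inter isClosed_closure).isCompact
      · exact fun n => hAcl.inter isClosed_closure
    obtain ⟨x, hx⟩ := hnonempty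
    simp only [mem_iInter] at hx
    have hgx : ∀ n : ℕ, g n x = cond (b n) 1 0 := by
      intro n
      have hxZ : x ∈ Z (b n) n := by
        have hxn := hx (n + 1)
        have : x ∈ A ∩ closure (V (b n :: branchList b n)) := hxn
        exact Set.mem_biUnion (branchList_length b n) this
      cases hbn : b n
      · rw [hbn] at hxZ
        have := hg0 n hxZ
        simpa using this
      · rw [hbn] at hxZ
        have := hg1 n hxZ
        simpa using this
    refine ⟨x, ?_⟩
    show (∑' n, g n x * wt n) = GG b
    unfold GG
    exact tsum_congr fun n => by rw [hgx n]
  -- assemble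
  refine ⟨fun x => ⟨F x, hF0 x, hF1 x⟩, Continuous.subtype_mk hFcont _, ?_⟩
  intro t
  have ht : (t : ℝ) ∈ Icc (0:ℝ) 1 := t.2
  obtain ⟨b, hb⟩ := GG_surj_Icc (t : ℝ) ht
  obtain ⟨x, hx⟩ := hbranch b
  exact ⟨x, Subtype.ext (show F x = (t : ℝ) by rw [hx, hb])⟩


theorem stmt17 {X : Type u} [TopologicalSpace X] [CompactSpace X] [T2Space X] :
    IsScatteredSet (Set.univ : Set X) ↔
      ¬ ∃ f : X → unitInterval, Continuous f ∧ Function.Surjective f := by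
  constructor
  · exact stmt17_aux_fwd
  · intro h
    by_contra hns
    exact h (stmt17_aux_bwd hns)
end
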